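/- For every real ε with 0 < ε < 1/2, with t = t(n) = ⌈n^{1/2+ε}⌉, the proportion, among all C(n+t−1, t) configurations of t pebbles on n vertices, of those configurations whose number of birthdays B(C) is at most n^{ε}, tends to 0 as n → ∞. -/

import Mathlib

open Finset

/-- A single pebbling move on `G`: remove two pebbles from a vertex `u` with at least
two pebbles and add one pebble to a vertex `v` adjacent to `u`. -/
def PebblingMove {V : Type*} [DecidableEq V] (G : SimpleGraph V) (C C' : V → ℕ) : Prop :=
  ∃ u v : V, G.Adj u v ∧ 2 ≤ C u ∧
    C' = fun w => if w = u then C u - 2 else if w = v then C v + 1 else C w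

/-- A configuration is solvable if every vertex can receive a pebble after finitely
many pebbling moves. -/
def Solvable {V : Type*} [DecidableEq V] (G : SimpleGraph V) (C : V → ℕ) : Prop :=
  ∀ v : V, ∃ C' : V → ℕ, Relation.ReflTransGen (PebblingMove G) C C' ∧ 1 ≤ C' v

/-- The pebbling number `π(G)`: the least `t` such that every configuration of size `t`
is solvable. -/
noncomputable def pebblingNumber {V : Type*} [Fintype V] [DecidableEq V]
    (G : SimpleGraph V) : ℕ :=
  sInf {t : ℕ | ∀ C : V → ℕ, (∑ v, C v) = t → Solvable G C}

/-- The finset of all configurations of `t` pebbles on `n` vertices. -/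
def configs (n t : ℕ) : Finset (Fin n → ℕ) :=
  (Fintype.piFinset fun _ : Fin n => Finset.range (t + 1)).filter fun C => ∑ i, C i = t

open scoped Classical in
/-- `P(G; t)`: the proportion of solvable configurations among all `C(n+t-1, t)`
configurations of size `t`. -/
noncomputable def solvableProportion (n : ℕ) (G : SimpleGraph (Fin n)) (t : ℕ) : ℝ :=
  (((configs n t).filter fun C => Solvable G C).card : ℝ) / (Nat.choose (n + t - 1) t : ℝ)

/-- `τ_α(G)`: the least `t` with `P(G;t) ≥ α`. -/
noncomputable def tauAlpha (n : ℕ) (G : SimpleGraph (Fin n)) (α : ℝ) : ℕ :=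
  sInf {t : ℕ | α ≤ solvableProportion n G t}

/-- A path on vertices `0, …, L-1` whose endpoint `L-1` is joined by an edge to vertex
`L` of the clique on vertices `L, …, n-1`. -/
def pathClique (n L : ℕ) : SimpleGraph (Fin n) :=
  SimpleGraph.fromRel fun i j =>
    (j.val = i.val + 1 ∧ j.val ≤ L) ∨ (L ≤ i.val ∧ L ≤ j.val)

/-- `G_n`: a path with `⌊log₂ n⌋` vertices attached to a clique on the remaining vertices. -/
def Ggraph (n : ℕ) : SimpleGraph (Fin n) := pathClique n (Nat.log 2 n)

/-- Two disjoint paths on `0, …, L-1` and `L, …, 2L-1`, whose endpoints `L-1` and `2L-1`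
are each joined by an edge to vertex `2L` of the clique on vertices `2L, …, n-1`. -/
def twoPathClique (n L : ℕ) : SimpleGraph (Fin n) :=
  SimpleGraph.fromRel fun i j =>
    (j.val = i.val + 1 ∧ j.val < L) ∨
    (L ≤ i.val ∧ j.val = i.val + 1 ∧ j.val < 2 * L) ∨
    (2 * L ≤ i.val ∧ 2 * L ≤ j.val) ∨
    (i.val + 1 = L ∧ j.val = 2 * L) ∨
    (i.val + 1 = 2 * L ∧ j.val = 2 * L)

/-- `L' = ⌊(1/2)·log₂ n + m⌋`. -/
noncomputable def Lp (n m : ℕ) : ℕ := ⌊Real.logb 2 n / 2 + m⌋₊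

/-- `H_n` with parameter `m`: two paths with `L'` vertices each, attached to a clique on
the remaining `n - 2L'` vertices. -/
noncomputable def Hgraph (n m : ℕ) : SimpleGraph (Fin n) := twoPathClique n (Lp n m)

/-!
Merging the only pebble of a vertex into another occupied vertex lowers the number `s` of
occupied vertices by one. A configuration of `t` pebbles with `s` occupied vertices has at
least `2s - t` vertices holding a single pebble, hence at least `(2s - t)(s - 1)` merges, while a
configuration with `s - 1` occupied vertices is reached by at most `n(t - s + 1)` merges (choose
the emptied vertex and a vertex with at least two pebbles). Double counting gives
`|L_s| (2s - t)(s - 1) ≤ |L_{s-1}| n(t - s + 1)`. With at most `b = ⌊n^ε⌋` birthdays, i.e.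
`s ≥ t - b`, the factor is about `n b / t² ≈ n^{-ε}`; applying it twice bounds each of the
`b + 1` levels by `O(n^{-2ε})` of all configurations, so together they make up `O(n^{-ε})`.
-/

namespace Birthdays

section Counting

variable {ι : Type*}

theorem two_mul_card_pos_le [Fintype ι] (f : ι → ℕ) :
    2 * #{i | 1 ≤ f i} ≤ ∑ i, f i + #{i | f i = 1} := by
  simp only [card_filter, mul_sum, ← sum_add_distrib]
  exact sum_le_sum fun i _ => by split_ifs <;> omega

theorem card_pos_add_card_two_le [Fintype ι] (f : ι → ℕ) :
    #{i | 1 ≤ f i} + #{i | 2 ≤ f i} ≤ ∑ i, f i := by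
  simp only [card_filter, ← sum_add_distrib]
  exact sum_le_sum fun i _ => by split_ifs <;> omega

variable [DecidableEq ι]

def moveSingleton (C : ι → ℕ) (v u : ι) : ι → ℕ :=
  fun w => if w = v then 0 else if w = u then C u + 1 else C w

def Merges (C C' : ι → ℕ) : Prop :=
  ∃ v u, v ≠ u ∧ C v = 1 ∧ 1 ≤ C u ∧ C' = moveSingleton C v u

variable {C : ι → ℕ} {v u : ι}

theorem sum_moveSingleton [Fintype ι] (hvu : v ≠ u) (hv : C v = 1) :
    ∑ w, moveSingleton C v u w = ∑ w, C w := by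
  have key : ∑ w, (moveSingleton C v u w + if w = v then 1 else 0)
      = ∑ w, (C w + if w = u then 1 else 0) :=
    sum_congr rfl fun w _ => by
      unfold moveSingleton; split_ifs <;> simp_all
  simpa only [sum_add_distrib, sum_ite_eq', mem_univ, if_true, add_left_inj] using key

theorem card_pos_moveSingleton [Fintype ι] (hv : 1 ≤ C v) (hu : 1 ≤ C u) :
    #{i | 1 ≤ moveSingleton C v u i} = #{i | 1 ≤ C i} - 1 := by
  have : ({i | 1 ≤ moveSingleton C v u i} : Finset ι) = ({i | 1 ≤ C i} : Finset ι).erase v := by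
    ext i
    rw [mem_filter_univ, mem_erase, mem_filter_univ, moveSingleton]
    split_ifs <;> simp_all
  rw [this, card_erase_of_mem ((mem_filter_univ v).2 hv)]

theorem eq_of_moveSingleton_eq {C' : ι → ℕ} (hvu : v ≠ u) (hv : C v = 1)
    (h : moveSingleton C v u = C') :
    C = fun w => if w = v then 1 else if w = u then C' u - 1 else C' w := by
  subst h
  funext w
  simp only [moveSingleton]
  split_ifs <;> simp_all

theorem moveSingleton_injOn :
    Set.InjOn (fun p : ι × ι => moveSingleton C p.1 p.2)
      {p | p.1 ≠ p.2 ∧ 1 ≤ C p.1 ∧ 1 ≤ C p.2} := by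
  rintro ⟨v, u⟩ ⟨hvu, hv, hu⟩ ⟨v', u'⟩ ⟨hvu', hv', hu'⟩ h
  dsimp only at hvu hv hu hvu' hv' hu'
  have hat := congrFun h
  simp only [moveSingleton] at hat
  have hv : v = v' := by
    by_contra hne
    have := hat v
    rw [if_pos rfl, if_neg hne] at this
    split_ifs at this
    omega
  subst hv
  have hu : u = u' := by
    by_contra hne
    have := hat u
    rw [if_neg hvu.symm, if_pos rfl, if_neg hvu.symm] at this
    split_ifs at this
    omega
  rw [hu]

end Counting

section Levels

variable {n t s b : ℕ} {C C' : Fin n → ℕ}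

theorem mem_configs_iff : C ∈ configs n t ↔ ∑ i, C i = t := by
  refine ⟨fun h => (mem_filter.1 h).2, fun h => mem_filter.2 ⟨?_, h⟩⟩
  simp only [Fintype.mem_piFinset, mem_range, Nat.lt_succ_iff]
  exact fun i => h ▸ single_le_sum (fun _ _ => Nat.zero_le _) (mem_univ i)

theorem card_configs (n t : ℕ) : #(configs n t) = (n + t - 1).choose t := by
  calc #(configs n t) = Nat.card {C : Fin n → ℕ // ∑ i, C i = t} :=
        (Nat.card_eq_finsetCard _).symm.trans
          (Nat.card_congr (Equiv.subtypeEquivRight fun _ => mem_configs_iff))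
    _ = Nat.card (Sym (Fin n) t) := Nat.card_congr (Sym.equivNatSumOfFintype (Fin n) t).symm
    _ = (n + t - 1).choose t := by
        rw [Nat.card_eq_fintype_card, Sym.card_sym_eq_choose, Fintype.card_fin]

theorem card_pos_le_of_mem_configs (hC : C ∈ configs n t) : #{i | 1 ≤ C i} ≤ t :=
  mem_configs_iff.1 hC ▸ le_of_add_le_left (card_pos_add_card_two_le C)

def occupancyLevel (n t s : ℕ) : Finset (Fin n → ℕ) :=
  {C ∈ configs n t | #{i | 1 ≤ C i} = s}

theorem occupancyLevel_subset_configs : occupancyLevel n t s ⊆ configs n t :=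
  filter_subset _ _

theorem moveSingleton_mem_occupancyLevel {v u : Fin n} (hC : C ∈ occupancyLevel n t s)
    (hvu : v ≠ u) (hv : C v = 1) (hu : 1 ≤ C u) :
    moveSingleton C v u ∈ occupancyLevel n t (s - 1) := by
  obtain ⟨hconf, hs⟩ := mem_filter.1 hC
  refine mem_filter.2 ⟨mem_configs_iff.2 ?_, ?_⟩
  · rw [sum_moveSingleton hvu hv, mem_configs_iff.1 hconf]
  · rw [card_pos_moveSingleton hv.ge hu, hs]

open scoped Classical in
/-- Every vertex holding a single pebble may be merged into any of the other `s - 1` occupied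
vertices, and at least `2 * s - t` of the `s` occupied vertices hold a single pebble. -/
theorem le_card_bipartiteAbove_merges (hC : C ∈ occupancyLevel n t s) :
    (2 * s - t) * (s - 1) ≤ #((occupancyLevel n t (s - 1)).bipartiteAbove Merges C) := by
  obtain ⟨hconf, hs⟩ := mem_filter.1 hC
  set A : Finset (Fin n) := {v | C v = 1}
  set B : Finset (Fin n) := {u | 1 ≤ C u}
  have hAB : A ⊆ B := fun v hv => mem_filter.2 ⟨mem_univ v, (mem_filter.1 hv).2.ge⟩
  have hA : 2 * s - t ≤ #A := by
    have : 2 * #B ≤ ∑ i, C i + #A := two_mul_card_pos_le C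
    rw [mem_configs_iff.1 hconf] at this
    omega
  have hpairs : #(A.sigma fun v => B.erase v) = #A * (s - 1) := by
    rw [card_sigma, sum_congr rfl fun v hv => card_erase_of_mem (hAB hv), sum_const, hs,
      smul_eq_mul]
  have hpair : ∀ p ∈ A.sigma fun v => B.erase v, p.1 ≠ p.2 ∧ C p.1 = 1 ∧ 1 ≤ C p.2 :=
    fun p hp => by
      obtain ⟨hv, hu⟩ := mem_sigma.1 hp
      obtain ⟨hvu, hu⟩ := mem_erase.1 hu
      exact ⟨Ne.symm hvu, (mem_filter.1 hv).2, (mem_filter.1 hu).2⟩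
  have hinj : #(A.sigma fun v => B.erase v)
      ≤ #((occupancyLevel n t (s - 1)).bipartiteAbove Merges C) := by
    refine card_le_card_of_injOn (fun p => moveSingleton C p.1 p.2) (fun p hp => ?_) ?_
    · obtain ⟨hvu, hv, hu⟩ := hpair p hp
      exact (mem_bipartiteAbove _).2
        ⟨moveSingleton_mem_occupancyLevel hC hvu hv hu, p.1, p.2, hvu, hv, hu, rfl⟩
    · intro p hp q hq h
      obtain ⟨hpvu, hpv, hpu⟩ := hpair p (mem_coe.1 hp)
      obtain ⟨hqvu, hqv, hqu⟩ := hpair q (mem_coe.1 hq)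
      have := moveSingleton_injOn (C := C) (x₁ := (p.1, p.2)) ⟨hpvu, hpv.ge, hpu⟩
        (x₂ := (q.1, q.2)) ⟨hqvu, hqv.ge, hqu⟩ h
      exact Sigma.ext (congrArg Prod.fst this) (heq_of_eq (congrArg Prod.snd this))
  calc (2 * s - t) * (s - 1) ≤ #A * (s - 1) := Nat.mul_le_mul_right _ hA
    _ ≤ _ := hpairs ▸ hinj

open scoped Classical in
/-- A merge into `C'` is undone by choosing the vertex `v` it emptied and the vertex `u` that
received the pebble, which then holds at least two pebbles. -/
theorem card_bipartiteBelow_merges_le (hC' : C' ∈ occupancyLevel n t (s - 1)) :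
    #((occupancyLevel n t s).bipartiteBelow Merges C') ≤ n * (t - s + 1) := by
  obtain ⟨hconf, hs⟩ := mem_filter.1 hC'
  have htwo : #{u | 2 ≤ C' u} ≤ t - s + 1 := by
    have := card_pos_add_card_two_le C'
    rw [mem_configs_iff.1 hconf, hs] at this
    omega
  calc #((occupancyLevel n t s).bipartiteBelow Merges C')
      ≤ #(univ ×ˢ ({u | 2 ≤ C' u} : Finset (Fin n))) := by
        refine card_le_card_of_surjOn
          (fun p w => if w = p.1 then 1 else if w = p.2 then C' p.2 - 1 else C' w) ?_
        intro C hC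
        obtain ⟨v, u, hvu, hv, hu, hmove⟩ := ((mem_bipartiteBelow _).1 (mem_coe.1 hC)).2
        have hu2 : 2 ≤ C' u := by simp [hmove, moveSingleton, hvu.symm, hu]
        exact ⟨(v, u), mem_coe.2 (mem_product.2 ⟨mem_univ _, mem_filter.2 ⟨mem_univ _, hu2⟩⟩),
          (eq_of_moveSingleton_eq hvu hv hmove.symm).symm⟩
    _ ≤ n * (t - s + 1) := by
        rw [card_product, card_univ, Fintype.card_fin]
        exact Nat.mul_le_mul_left _ htwo

open scoped Classical in
theorem card_occupancyLevel_mul_le :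
    #(occupancyLevel n t s) * ((2 * s - t) * (s - 1))
      ≤ #(occupancyLevel n t (s - 1)) * (n * (t - s + 1)) :=
  card_mul_le_card_mul Merges (fun _ hC => le_card_bipartiteAbove_merges hC)
    (fun _ hC' => card_bipartiteBelow_merges_le hC')

theorem card_occupancyLevel_mul_le_card_configs (hbs : t - b ≤ s) (hst : s ≤ t) :
    #(occupancyLevel n t s) * (t - 2 * b - 2) ^ 4 ≤ #(configs n t) * (n * (b + 2)) ^ 2 := by
  set d := t - 2 * b - 2
  set M := n * (b + 2)
  have step : ∀ r, t - b - 1 ≤ r → r ≤ t →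
      #(occupancyLevel n t r) * (d * d) ≤ #(occupancyLevel n t (r - 1)) * M := fun r h₁ h₂ =>
    calc #(occupancyLevel n t r) * (d * d)
        ≤ #(occupancyLevel n t r) * ((2 * r - t) * (r - 1)) :=
          Nat.mul_le_mul_left _ (Nat.mul_le_mul (by omega) (by omega))
      _ ≤ #(occupancyLevel n t (r - 1)) * (n * (t - r + 1)) := card_occupancyLevel_mul_le
      _ ≤ #(occupancyLevel n t (r - 1)) * M :=
          Nat.mul_le_mul_left _ (Nat.mul_le_mul_left _ (by omega))
  calc #(occupancyLevel n t s) * d ^ 4 = #(occupancyLevel n t s) * (d * d) * (d * d) := by ring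
    _ ≤ #(occupancyLevel n t (s - 1)) * M * (d * d) :=
        Nat.mul_le_mul_right _ (step s (by omega) hst)
    _ = #(occupancyLevel n t (s - 1)) * (d * d) * M := by ring
    _ ≤ #(occupancyLevel n t (s - 1 - 1)) * M * M :=
        Nat.mul_le_mul_right _ (step (s - 1) (by omega) (by omega))
    _ ≤ #(configs n t) * M * M := Nat.mul_le_mul_right _ <|
        Nat.mul_le_mul_right _ (card_le_card occupancyLevel_subset_configs)
    _ = #(configs n t) * M ^ 2 := by ring

def fewBirthdays (n t b : ℕ) : Finset (Fin n → ℕ) :=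
  {C ∈ configs n t | t - #{i | 1 ≤ C i} ≤ b}

theorem card_fewBirthdays_mul_le :
    #(fewBirthdays n t b) * (t - 2 * b - 2) ^ 4
      ≤ (b + 1) * (#(configs n t) * (n * (b + 2)) ^ 2) := by
  have hcover : fewBirthdays n t b ⊆ (Icc (t - b) t).biUnion (occupancyLevel n t) :=
    fun C hC => by
      obtain ⟨hconf, hb⟩ := mem_filter.1 hC
      exact mem_biUnion.2 ⟨_, mem_Icc.2 ⟨by omega, card_pos_le_of_mem_configs hconf⟩,
        mem_filter.2 ⟨hconf, rfl⟩⟩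
  calc #(fewBirthdays n t b) * (t - 2 * b - 2) ^ 4
      ≤ (∑ s ∈ Icc (t - b) t, #(occupancyLevel n t s)) * (t - 2 * b - 2) ^ 4 :=
        Nat.mul_le_mul_right _ ((card_le_card hcover).trans card_biUnion_le)
    _ = ∑ s ∈ Icc (t - b) t, #(occupancyLevel n t s) * (t - 2 * b - 2) ^ 4 := sum_mul _ _ _
    _ ≤ ∑ _s ∈ Icc (t - b) t, #(configs n t) * (n * (b + 2)) ^ 2 :=
        sum_le_sum fun s hs => card_occupancyLevel_mul_le_card_configs
          (mem_Icc.1 hs).1 (mem_Icc.1 hs).2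
    _ ≤ (b + 1) * (#(configs n t) * (n * (b + 2)) ^ 2) := by
        rw [sum_const, Nat.card_Icc, smul_eq_mul]
        exact Nat.mul_le_mul_right _ (by omega)

end Levels

theorem card_fewBirthdays_div_card_configs_le {n t b : ℕ} {x y : ℝ} (hx : 8 ≤ x)
    (hy : 1 ≤ y) (hn : x ^ 2 = n) (hb : (b : ℝ) ≤ y) (ht : x * y ≤ t) :
    (#(fewBirthdays n t b) : ℝ) / #(configs n t) ≤ 288 / y := by
  have hxy : 0 < x * y / 2 := by positivity
  have hd : x * y / 2 ≤ ((t - 2 * b - 2 : ℕ) : ℝ) := by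
    have hb' : 2 * (b : ℝ) + 2 ≤ x * y / 2 := by nlinarith
    have htb : 2 * b + 2 ≤ t := by exact_mod_cast (by linarith : (2 * b + 2 : ℝ) ≤ t)
    rw [show t - 2 * b - 2 = t - (2 * b + 2) by omega, Nat.cast_sub htb]
    push_cast
    linarith
  have hconf : (0 : ℝ) < #(configs n t) := by
    have : 1 ≤ n := by exact_mod_cast (by nlinarith : (1 : ℝ) ≤ n)
    rw [card_configs]
    exact_mod_cast Nat.choose_pos (by omega)
  have hcount : (#(fewBirthdays n t b) : ℝ) * ((t - 2 * b - 2 : ℕ) : ℝ) ^ 4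
      ≤ ((b : ℝ) + 1) * (#(configs n t) * ((n : ℝ) * (b + 2)) ^ 2) := by
    exact_mod_cast card_fewBirthdays_mul_le
  have hcoef : ((b : ℝ) + 1) * ((n : ℝ) * (b + 2)) ^ 2 * y ≤ 288 * (x * y / 2) ^ 4 := by
    have hM : (n : ℝ) * (b + 2) ≤ 3 * x ^ 2 * y := by rw [← hn]; nlinarith
    calc ((b : ℝ) + 1) * ((n : ℝ) * (b + 2)) ^ 2 * y ≤ 2 * y * (3 * x ^ 2 * y) ^ 2 * y := by
          gcongr
          linarith
      _ = 288 * (x * y / 2) ^ 4 := by ring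
  rw [div_le_div_iff₀ hconf (by linarith)]
  refine le_of_mul_le_mul_right ?_ (pow_pos hxy 4)
  calc (#(fewBirthdays n t b) : ℝ) * y * (x * y / 2) ^ 4
      ≤ (#(fewBirthdays n t b) : ℝ) * y * ((t - 2 * b - 2 : ℕ) : ℝ) ^ 4 := by gcongr
    _ = y * ((#(fewBirthdays n t b) : ℝ) * ((t - 2 * b - 2 : ℕ) : ℝ) ^ 4) := by ring
    _ ≤ y * (((b : ℝ) + 1) * (#(configs n t) * ((n : ℝ) * (b + 2)) ^ 2)) := by gcongr
    _ = #(configs n t) * (((b : ℝ) + 1) * ((n : ℝ) * (b + 2)) ^ 2 * y) := by ring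
    _ ≤ #(configs n t) * (288 * (x * y / 2) ^ 4) := by gcongr
    _ = 288 * #(configs n t) * (x * y / 2) ^ 4 := by ring

end Birthdays

open Filter Birthdays

theorem few_birthdays_proportion_tendsto_zero_eps_general (ε : ℝ) (hε0 : 0 < ε) :
    Filter.Tendsto (fun n : ℕ =>
      (Nat.card {C : Fin n → ℕ // (∑ i, C i = ⌈(n : ℝ) ^ (1 / 2 + ε)⌉₊) ∧
          ((⌈(n : ℝ) ^ (1 / 2 + ε)⌉₊ - (Finset.univ.filter fun i => 1 ≤ C i).card : ℕ) : ℝ)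
            ≤ (n : ℝ) ^ ε} : ℝ) /
        (Nat.choose (n + ⌈(n : ℝ) ^ (1 / 2 + ε)⌉₊ - 1) ⌈(n : ℝ) ^ (1 / 2 + ε)⌉₊ : ℝ))
      Filter.atTop (nhds 0) := by
  have hx : ∀ᶠ n : ℕ in atTop, (8 : ℝ) ≤ (n : ℝ) ^ (1 / 2 : ℝ) :=
    ((tendsto_rpow_atTop (by norm_num)).comp tendsto_natCast_atTop_atTop).eventually_ge_atTop 8
  have hy : ∀ᶠ n : ℕ in atTop, (1 : ℝ) ≤ (n : ℝ) ^ ε :=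
    ((tendsto_rpow_atTop hε0).comp tendsto_natCast_atTop_atTop).eventually_ge_atTop 1
  have hbound : Tendsto (fun n : ℕ => 288 / (n : ℝ) ^ ε) atTop (nhds 0) :=
    tendsto_const_nhds.div_atTop ((tendsto_rpow_atTop hε0).comp tendsto_natCast_atTop_atTop)
  refine squeeze_zero' (Eventually.of_forall fun n => by positivity) ?_ hbound
  filter_upwards [hx, hy] with n hx hy
  set t := ⌈(n : ℝ) ^ (1 / 2 + ε)⌉₊
  have hcard : Nat.card {C : Fin n → ℕ // (∑ i, C i = t) ∧
      ((t - (Finset.univ.filter fun i => 1 ≤ C i).card : ℕ) : ℝ) ≤ (n : ℝ) ^ ε}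
      = #(fewBirthdays n t ⌊(n : ℝ) ^ ε⌋₊) :=
    (Nat.card_congr (Equiv.subtypeEquivRight fun C => by
      rw [fewBirthdays, mem_filter, mem_configs_iff, Nat.le_floor_iff (by positivity)])).trans
      (Nat.card_eq_finsetCard _)
  rw [hcard, ← card_configs]
  refine card_fewBirthdays_div_card_configs_le hx hy ?_ (Nat.floor_le (by positivity)) ?_
  · rw [← Real.rpow_natCast, ← Real.rpow_mul (Nat.cast_nonneg n)]
    norm_num
  · rw [← Real.rpow_add' (Nat.cast_nonneg n) (by positivity)]
    exact Nat.le_ceil _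

/-- For `0 < ε < 1/2`, with `t = ⌈n^{1/2+ε}⌉`, the proportion of
configurations of `t` pebbles on `n` vertices with at most `n^ε` birthdays tends to `0`. -/
theorem few_birthdays_proportion_tendsto_zero_eps (ε : ℝ) (hε0 : 0 < ε) (hε : ε < 1 / 2) :
    Filter.Tendsto (fun n : ℕ =>
      (Nat.card {C : Fin n → ℕ // (∑ i, C i = ⌈(n : ℝ) ^ (1 / 2 + ε)⌉₊) ∧
          ((⌈(n : ℝ) ^ (1 / 2 + ε)⌉₊ - (Finset.univ.filter fun i => 1 ≤ C i).card : ℕ) : ℝ)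
            ≤ (n : ℝ) ^ ε} : ℝ) /
        (Nat.choose (n + ⌈(n : ℝ) ^ (1 / 2 + ε)⌉₊ - 1) ⌈(n : ℝ) ^ (1 / 2 + ε)⌉₊ : ℝ))
      Filter.atTop (nhds 0) :=
  few_birthdays_proportion_tendsto_zero_eps_general ε hε0
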